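/- arXiv:1510.05025 — 2 statements merged into one kernel-verified Lean document; each statement's English description precedes it below -/
import Mathlib

section
/- Let $A = \mathbf{C}[x,y,z]$ and $R = \mathbf{C}[s,x,y,z]/(s^2 - x^2 + y^2 - z^2)$, an $A$-algebra via the inclusion $A \to R$. Let $I' = (x-y, z+s) \subseteq R$. Then $I'$, regarded as an $A$-module, is free of rank $2$, with basis given by the elements $x - y$ and $z + s$. -/
open MvPolynomial

noncomputable section

/-- The polynomial ring `ℂ[s,x,y,z]` with `s = X 0`, `x = X 1`, `y = X 2`, `z = X 3`. -/
abbrev P4 : Type := MvPolynomial (Fin 4) ℂ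

/-- The conifold relation `s² - x² + y² - z²`. -/
def conifoldRel : P4 := X 0 ^ 2 - X 1 ^ 2 + X 2 ^ 2 - X 3 ^ 2

/-- The conifold ring `R = ℂ[s,x,y,z]/(s² - x² + y² - z²)`. -/
abbrev ConifoldRing : Type := P4 ⧸ Ideal.span {conifoldRel}

/-- The quotient map `ℂ[s,x,y,z] → R`. -/
def cq : P4 →+* ConifoldRing := Ideal.Quotient.mk _

/-- The polynomial subring `A = ℂ[x,y,z]` (variables `x = X 0`, `y = X 1`, `z = X 2`),
mapping into `R = ℂ[s,x,y,z]/(s² - x² + y² - z²)` by the natural inclusion. -/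
abbrev A3 : Type := MvPolynomial (Fin 3) ℂ

/-- The inclusion `A = ℂ[x,y,z] → R`. -/
def incl : A3 →ₐ[ℂ] ConifoldRing := aeval fun i => cq (X i.succ)

/-- The ideal `I' = (x - y, z + s)` of the Weil divisor `D'` on the conifold. -/
def Iprime : Ideal ConifoldRing := Ideal.span {cq (X 1 - X 2), cq (X 3 + X 0)}

set_option synthInstance.maxHeartbeats 1000000
set_option maxHeartbeats 1000000

local instance instA : Algebra A3 ConifoldRing := incl.toRingHom.toAlgebra

lemma smul_def' (a : A3) (r : ConifoldRing) : a • r = incl a * r := rfl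

lemma cq_rename (a : A3) : cq (rename Fin.succ a) = incl a := by
  have h : (Ideal.Quotient.mkₐ ℂ (Ideal.span {conifoldRel})).comp
      (rename (R := ℂ) Fin.succ) = incl :=
    MvPolynomial.algHom_ext fun i => by simp [incl, cq]
  simpa [cq] using DFunLike.congr_fun h a

lemma hsq : cq (X 0) ^ 2 = cq (X 1 ^ 2 - X 2 ^ 2 + X 3 ^ 2) := by
  show Ideal.Quotient.mk _ _ ^ 2 = Ideal.Quotient.mk _ _
  rw [← map_pow, Ideal.Quotient.eq]
  have h : (X 0 : P4) ^ 2 - (X 1 ^ 2 - X 2 ^ 2 + X 3 ^ 2) = conifoldRel := by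
    unfold conifoldRel; ring
  rw [h]
  exact Ideal.subset_span rfl

/-- the A3-span of the two generators -/
def Mspan : Submodule A3 ConifoldRing :=
  Submodule.span A3 {cq (X 1 - X 2), cq (X 3 + X 0)}

lemma g1_mem : cq (X 1 - X 2) ∈ Mspan := Submodule.subset_span (by left; rfl)
lemma g2_mem : cq (X 3 + X 0) ∈ Mspan := Submodule.subset_span (by right; rfl)

lemma comb (a b : A3) :
    a • cq (X 1 - X 2) + b • cq (X 3 + X 0)
      = cq (rename Fin.succ a * (X 1 - X 2) + rename Fin.succ b * (X 3 + X 0)) := by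
  rw [smul_def', smul_def', ← cq_rename, ← cq_rename, ← map_mul, ← map_mul, ← map_add]

lemma sg1 : cq (X 0) * cq (X 1 - X 2) ∈ Mspan := by
  have h : cq (X 0) * cq (X 1 - X 2)
      = (-(X 2) : A3) • cq (X 1 - X 2) + (X 0 - X 1 : A3) • cq (X 3 + X 0) := by
    rw [comb, ← map_mul]
    congr 1
    simp only [map_sub, map_neg, rename_X]
    have h0 : (0 : Fin 3).succ = (1 : Fin 4) := rfl
    have h1 : (1 : Fin 3).succ = (2 : Fin 4) := rfl
    have h2 : (2 : Fin 3).succ = (3 : Fin 4) := rfl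
    rw [h0, h1, h2]; ring
  rw [h]
  exact Submodule.add_mem _ (Submodule.smul_mem _ _ g1_mem) (Submodule.smul_mem _ _ g2_mem)

lemma sg2 : cq (X 0) * cq (X 3 + X 0) ∈ Mspan := by
  have h : cq (X 0) * cq (X 3 + X 0)
      = (X 0 + X 1 : A3) • cq (X 1 - X 2) + (X 2 : A3) • cq (X 3 + X 0) := by
    have e1 : cq (X 0) * cq (X 3 + X 0) = cq (X 0 * X 3) + cq (X 0) ^ 2 := by
      rw [← map_mul]; show Ideal.Quotient.mk _ _ = _
      rw [sq, ← map_mul, ← map_add]; congr 1; ring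
    rw [e1, hsq, comb, ← map_add]
    congr 1
    simp only [map_add, map_sub, rename_X]
    have h0 : (0 : Fin 3).succ = (1 : Fin 4) := rfl
    have h1 : (1 : Fin 3).succ = (2 : Fin 4) := rfl
    have h2 : (2 : Fin 3).succ = (3 : Fin 4) := rfl
    rw [h0, h1, h2]; ring
  rw [h]
  exact Submodule.add_mem _ (Submodule.smul_mem _ _ g1_mem) (Submodule.smul_mem _ _ g2_mem)

lemma X_mul_mem (i : Fin 4) {m : ConifoldRing} (hm : m ∈ Mspan) : cq (X i) * m ∈ Mspan := by
  induction i using Fin.cases with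
  | zero =>
    induction hm using Submodule.span_induction with
    | mem x hx =>
      rcases hx with h | h
      · rw [h]; exact sg1
      · rw [Set.mem_singleton_iff] at h; rw [h]; exact sg2
    | zero => rw [mul_zero]; exact Submodule.zero_mem _
    | add x y _ _ hx hy => rw [mul_add]; exact Submodule.add_mem _ hx hy
    | smul a x _ hx => rw [mul_smul_comm]; exact Submodule.smul_mem _ _ hx
  | succ j =>
    have h : cq (X j.succ) * m = (X j : A3) • m := by
      rw [smul_def', ← cq_rename, rename_X]
    rw [h]; exact Submodule.smul_mem _ _ hm

lemma mul_mem_M (p : P4) : ∀ m ∈ Mspan, cq p * m ∈ Mspan := by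
  induction p using MvPolynomial.induction_on with
  | C c =>
    intro m hm
    have h : cq (C c) * m = (C c : A3) • m := by
      rw [smul_def', ← cq_rename, rename_C]
    rw [h]; exact Submodule.smul_mem _ _ hm
  | add p q hp hq =>
    intro m hm
    rw [map_add, add_mul]
    exact Submodule.add_mem _ (hp m hm) (hq m hm)
  | mul_X p i hp =>
    intro m hm
    have h : cq (p * X i) * m = cq p * (cq (X i) * m) := by
      rw [map_mul, mul_assoc]
    rw [h]
    exact hp _ (X_mul_mem i hm)

lemma Meq : Submodule.restrictScalars A3 Iprime = Mspan := by
  apply le_antisymm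
  · intro x hx
    have hx' : x ∈ Ideal.span {cq (X 1 - X 2), cq (X 3 + X 0)} := hx
    clear hx
    induction hx' using Submodule.span_induction with
    | mem x hx =>
      rcases hx with h | h
      · rw [h]; exact g1_mem
      · rw [Set.mem_singleton_iff] at h; rw [h]; exact g2_mem
    | zero => exact Submodule.zero_mem _
    | add x y _ _ hx hy => exact Submodule.add_mem _ hx hy
    | smul r x _ hx =>
      obtain ⟨p, rfl⟩ := Ideal.Quotient.mk_surjective r
      exact mul_mem_M p x hx
  · show Submodule.span A3 _ ≤ _
    rw [Submodule.span_le]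
    rintro x (h | h)
    · rw [h]; exact Ideal.subset_span (by left; rfl)
    · rw [Set.mem_singleton_iff] at h; rw [h]
      exact Ideal.subset_span (by right; rfl)

lemma erename (a : A3) :
    MvPolynomial.finSuccEquiv ℂ 3 (rename Fin.succ a) = Polynomial.C a := by
  have h : ((MvPolynomial.finSuccEquiv ℂ 3).toAlgHom.comp (rename (R := ℂ) Fin.succ))
      = Polynomial.CAlgHom (R := ℂ) (A := A3) :=
    MvPolynomial.algHom_ext fun i => by
      simp [MvPolynomial.finSuccEquiv_X_succ, Polynomial.CAlgHom]
  simpa using DFunLike.congr_fun h a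

lemma key (a b : A3)
    (h : rename Fin.succ a * (X 1 - X 2) + rename Fin.succ b * (X 3 + X 0)
        ∈ Ideal.span {conifoldRel}) : a = 0 ∧ b = 0 := by
  rw [Ideal.mem_span_singleton] at h
  have hdvd := map_dvd (MvPolynomial.finSuccEquiv ℂ 3) h
  have h0 : (0 : Fin 3).succ = (1 : Fin 4) := rfl
  have h1 : (1 : Fin 3).succ = (2 : Fin 4) := rfl
  have h2 : (2 : Fin 3).succ = (3 : Fin 4) := rfl
  have erel : MvPolynomial.finSuccEquiv ℂ 3 conifoldRel
      = Polynomial.X ^ 2 - Polynomial.C (X 0 ^ 2 - X 1 ^ 2 + X 2 ^ 2 : A3) := by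
    rw [conifoldRel, ← h0, ← h1, ← h2]
    simp only [map_sub, map_add, map_pow, MvPolynomial.finSuccEquiv_X_zero,
      MvPolynomial.finSuccEquiv_X_succ, map_sub, map_add, map_pow]
    ring
  have ef : MvPolynomial.finSuccEquiv ℂ 3
        (rename Fin.succ a * (X 1 - X 2) + rename Fin.succ b * (X 3 + X 0))
      = Polynomial.C b * Polynomial.X
          + Polynomial.C (a * (X 0 - X 1) + b * X 2 : A3) := by
    rw [← h0, ← h1, ← h2]
    simp only [map_add, map_mul, map_sub, erename, MvPolynomial.finSuccEquiv_X_zero,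
      MvPolynomial.finSuccEquiv_X_succ, map_add, map_sub]
    ring
  rw [erel, ef] at hdvd
  have hdeg : (Polynomial.C b * Polynomial.X
      + Polynomial.C (a * (X 0 - X 1) + b * X 2 : A3)).degree
      < (Polynomial.X ^ 2 - Polynomial.C (X 0 ^ 2 - X 1 ^ 2 + X 2 ^ 2 : A3)).degree := by
    rw [Polynomial.degree_X_pow_sub_C (by norm_num)]
    exact lt_of_le_of_lt (Polynomial.degree_linear_le) (by norm_num)
  have hz := Polynomial.eq_zero_of_dvd_of_degree_lt hdvd hdeg
  have hb : b = 0 := by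
    have := congrArg (fun p => Polynomial.coeff p 1) hz
    simpa using this
  have ha0 : a * (X 0 - X 1 : A3) = 0 := by
    have := congrArg (fun p => Polynomial.coeff p 0) hz
    simp [hb] at this
    simpa [hb] using this
  have hxy : (X 0 - X 1 : A3) ≠ 0 :=
    sub_ne_zero.mpr (fun hh => by
      have := MvPolynomial.X_injective hh
      simp at this)
  rcases mul_eq_zero.mp ha0 with ha | ha
  · exact ⟨ha, hb⟩
  · exact absurd ha hxy

lemma main :
    ∃ bas : Module.Basis (Fin 2) A3 (Submodule.restrictScalars A3 Iprime),
      (bas 0 : ConifoldRing) = cq (X 1 - X 2) ∧ (bas 1 : ConifoldRing) = cq (X 3 + X 0) := by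
  have h1 : cq (X 1 - X 2) ∈ Submodule.restrictScalars A3 Iprime :=
    Ideal.subset_span (by left; rfl)
  have h2 : cq (X 3 + X 0) ∈ Submodule.restrictScalars A3 Iprime :=
    Ideal.subset_span (by right; rfl)
  set v0 : Submodule.restrictScalars A3 Iprime := ⟨cq (X 1 - X 2), h1⟩ with hv0
  set v1 : Submodule.restrictScalars A3 Iprime := ⟨cq (X 3 + X 0), h2⟩ with hv1
  set φ : (Fin 2 → A3) →ₗ[A3] Submodule.restrictScalars A3 Iprime :=
    (LinearMap.proj 0).smulRight v0 + (LinearMap.proj 1).smulRight v1 with hφ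
  have hφa : ∀ c : Fin 2 → A3, φ c = c 0 • v0 + c 1 • v1 := fun c => rfl
  have hinj : Function.Injective φ := by
    rw [injective_iff_map_eq_zero]
    intro c hc
    have hc' : c 0 • cq (X 1 - X 2) + c 1 • cq (X 3 + X 0) = 0 := by
      have := congrArg (Subtype.val) hc
      simpa [hφa, hv0, hv1] using this
    rw [comb] at hc'
    have hmem : rename Fin.succ (c 0) * (X 1 - X 2) + rename Fin.succ (c 1) * (X 3 + X 0)
        ∈ Ideal.span {conifoldRel} := by
      rwa [show cq = Ideal.Quotient.mk (Ideal.span {conifoldRel}) from rfl,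
        Ideal.Quotient.eq_zero_iff_mem] at hc'
    obtain ⟨ha, hb⟩ := key _ _ hmem
    funext i
    fin_cases i
    · exact ha
    · exact hb
  have hsurj : Function.Surjective φ := by
    intro x
    have hx : (x : ConifoldRing) ∈ Mspan := by
      rw [← Meq]; exact x.2
    rw [Mspan] at hx
    obtain ⟨c, d, hcd⟩ := Submodule.mem_span_pair.mp hx
    refine ⟨![c, d], ?_⟩
    apply Subtype.ext
    have : ((φ ![c, d] : Submodule.restrictScalars A3 Iprime) : ConifoldRing)
        = c • cq (X 1 - X 2) + d • cq (X 3 + X 0) := by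
      simp [hφa, hv0, hv1]
    rw [this, hcd]
  refine ⟨(Pi.basisFun A3 (Fin 2)).map (LinearEquiv.ofBijective φ ⟨hinj, hsurj⟩), ?_, ?_⟩
  · have : ((Pi.basisFun A3 (Fin 2)).map (LinearEquiv.ofBijective φ ⟨hinj, hsurj⟩)) 0
        = φ (Pi.single 0 1) := by
      simp [Module.Basis.map_apply, LinearEquiv.ofBijective_apply]
      rfl
    rw [this, hφa]
    simp [hv0, hv1]
  · have : ((Pi.basisFun A3 (Fin 2)).map (LinearEquiv.ofBijective φ ⟨hinj, hsurj⟩)) 1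
        = φ (Pi.single 1 1) := by
      simp [Module.Basis.map_apply, LinearEquiv.ofBijective_apply]
      rfl
    rw [this, hφa]
    simp [hv0, hv1]

/-!
STATEMENT 7: the ideal `I' = (x-y, z+s) ⊆ R`, regarded as a module over `A = ℂ[x,y,z]`
(via the inclusion `A → R`), is free of rank 2 with basis the elements `x - y` and `z + s`.
-/
set_option synthInstance.maxHeartbeats 1000000 in
set_option maxHeartbeats 1000000 in
theorem stmt7 :
    letI : Algebra A3 ConifoldRing := incl.toRingHom.toAlgebra
    ∃ bas : Module.Basis (Fin 2) A3 (Submodule.restrictScalars A3 Iprime),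
      (bas 0 : ConifoldRing) = cq (X 1 - X 2) ∧ (bas 1 : ConifoldRing) = cq (X 3 + X 0) := by
  exact main

end
end

section
/- Let $R = \mathbf{C}[s,x,y,z]/(s^2 - x^2 + y^2 - z^2)$, $A = \mathbf{C}[x,y,z]$, and $I' = (x-y, z+s) \subseteq R$ viewed as an $A$-module. Then an element $f_1(x,y,z) + s f_2(x,y,z) \in R$ lies in $I'$ if and only if $f_1 \equiv z f_2 \pmod{(x-y)}$ in $\mathbf{C}[x,y,z]$. -/
open MvPolynomial

noncomputable section

/-
Restricting functions on the conifold to the divisor `D' = {x = y, z = -s}`, parametrized by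
`(x, z)`, gives a ring map `R → ℂ[x,y,z]` (sending `s ↦ -z`, `y ↦ x`) that kills `I'`. Reduced
modulo `x - y`, it restricts to the quotient map on `A`, so it sends `f₁ + s f₂` to the class of
`f₁ - z f₂`; this gives one direction. Conversely, `f₁ = z f₂ + (x - y) h` exhibits
`f₁ + s f₂ = h (x - y) + f₂ (z + s)` as an element of `I'`.
-/

def divisorParam : P4 →ₐ[ℂ] A3 := aeval ![-X 2, X 0, X 0, X 2]

theorem divisorParam_conifoldRel : divisorParam conifoldRel = 0 := by
  simp [conifoldRel, divisorParam]

def restrictToDivisor : ConifoldRing →ₐ[ℂ] A3 :=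
  Ideal.Quotient.liftₐ _ divisorParam fun a ha => by
    obtain ⟨c, rfl⟩ := Ideal.mem_span_singleton'.mp ha
    rw [map_mul, divisorParam_conifoldRel, mul_zero]

theorem restrictToDivisor_cq (p : P4) : restrictToDivisor (cq p) = divisorParam p := rfl

theorem Iprime_le_ker_restrictToDivisor : Iprime ≤ RingHom.ker restrictToDivisor := by
  rw [Iprime, Ideal.span_le, Set.insert_subset_iff, Set.singleton_subset_iff]
  constructor <;> simp [SetLike.mem_coe, RingHom.mem_ker, restrictToDivisor_cq, divisorParam]

theorem mk_restrictToDivisor_incl (f : A3) :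
    Ideal.Quotient.mk (Ideal.span {X 0 - X 1}) (restrictToDivisor (incl f)) =
      Ideal.Quotient.mk _ f := by
  have hx : Ideal.Quotient.mk (Ideal.span {(X 0 - X 1 : A3)}) (X 0) = Ideal.Quotient.mk _ (X 1) :=
    Ideal.Quotient.eq.mpr (Ideal.mem_span_singleton_self _)
  have hcomp : ((Ideal.Quotient.mkₐ ℂ _).comp (restrictToDivisor.comp incl)) =
      Ideal.Quotient.mkₐ ℂ (Ideal.span {(X 0 - X 1 : A3)}) := by
    apply MvPolynomial.algHom_ext
    intro i
    fin_cases i <;> simp [incl, restrictToDivisor_cq, divisorParam, hx]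
  exact AlgHom.congr_fun hcomp f

theorem stmt8 (f₁ f₂ : A3) :
    incl f₁ + cq (X 0) * incl f₂ ∈ Iprime ↔ (X 0 - X 1 : A3) ∣ f₁ - X 2 * f₂ := by
  constructor
  · intro h
    have hzero := congrArg (Ideal.Quotient.mk (Ideal.span {(X 0 - X 1 : A3)}))
      (Iprime_le_ker_restrictToDivisor h)
    have hs : restrictToDivisor (cq (X 0)) = -X 2 := by simp [restrictToDivisor_cq, divisorParam]
    rw [map_add, map_mul, hs, map_add, map_mul, mk_restrictToDivisor_incl,
      mk_restrictToDivisor_incl, map_zero, ← map_mul, ← map_add, Ideal.Quotient.eq_zero_iff_mem,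
      Ideal.mem_span_singleton] at hzero
    simpa [sub_eq_add_neg] using hzero
  · rintro ⟨h, hh⟩
    have hxy : incl (X 0 - X 1) = cq (X 1 - X 2) := by simp [incl, cq]
    have hz : incl (X 2) = cq (X 3) := by simp [incl]
    rw [Iprime, Ideal.mem_span_pair]
    refine ⟨incl h, incl f₂, ?_⟩
    rw [eq_add_of_sub_eq hh]
    simp only [map_add, map_mul, hxy, hz]
    ring

end
end
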